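/- Let n ≥ 2 and M ≥ 2 be integers and let h : [-1,1) → ℝ be absolutely monotone, i.e., infinitely differentiable with h^{(i)}(t) ≥ 0 for all integers i ≥ 0 and all t ∈ [-1,1). Then every set C ⊆ S^{n-1} of M points satisfies E_h(C) ≥ M(M−1)·h(−1/(M−1)). -/
import Mathlib


open scoped RealInnerProductSpace

/-- `h` is absolutely monotone on `[-1,1)`: it is infinitely differentiable there and all
its derivatives are nonnegative there. -/
def AbsolutelyMonotone (h : ℝ → ℝ) : Prop :=
  ContDiffOn ℝ (⊤ : ℕ∞) h (Set.Ico (-1 : ℝ) 1) ∧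
    ∀ i : ℕ, ∀ t ∈ Set.Ico (-1 : ℝ) 1,
      0 ≤ iteratedDerivWithin i h (Set.Ico (-1 : ℝ) 1) t

/-- The `h`-energy of a finite set `C` on the sphere: the sum of `h(⟨x,y⟩)` over ordered
pairs of distinct points of `C`. -/
noncomputable def sphereEnergy (n : ℕ) (h : ℝ → ℝ) (C : Finset (EuclideanSpace ℝ (Fin n))) : ℝ :=
  letI := Classical.decEq (EuclideanSpace ℝ (Fin n))
  ∑ p ∈ C.offDiag, h ⟪p.1, p.2⟫

private lemma iteratedDerivWithin_congr_set' {f : ℝ → ℝ} {s t : Set ℝ} {x : ℝ}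
    (hst : s =ᶠ[nhds x] t) (n : ℕ) :
    iteratedDerivWithin n f s x = iteratedDerivWithin n f t x := by
  simp only [iteratedDerivWithin, iteratedFDerivWithin_congr_set hst]

private lemma interior_deriv_nonneg {h : ℝ → ℝ} (hh : AbsolutelyMonotone h) :
    ∀ i : ℕ, ∀ x ∈ Set.Ioo (-1 : ℝ) 1, 0 ≤ iteratedDeriv i h x := by
  intro i x hx
  have hmem : Set.Ico (-1 : ℝ) 1 ∈ nhds x := Ico_mem_nhds hx.1 hx.2
  have hset : Set.Ico (-1 : ℝ) 1 =ᶠ[nhds x] (Set.univ : Set ℝ) := by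
    filter_upwards [hmem] with y hy
    simp only [eq_iff_iff]
    exact iff_of_true hy trivial
  have := hh.2 i x ⟨hx.1.le, hx.2⟩
  rwa [iteratedDerivWithin_congr_set' hset, iteratedDerivWithin_univ] at this

/-- The first-level universal lower bound for energy on the Euclidean sphere. -/
theorem ulb_energy_sphere_first_level
    (n M : ℕ) (hn : 2 ≤ n) (hM : 2 ≤ M) (h : ℝ → ℝ) (hh : AbsolutelyMonotone h)
    (C : Finset (EuclideanSpace ℝ (Fin n)))
    (hC : (C : Set (EuclideanSpace ℝ (Fin n))) ⊆ Metric.sphere 0 1)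
    (hcard : C.card = M) :
    (M : ℝ) * ((M : ℝ) - 1) * h (-1 / ((M : ℝ) - 1)) ≤ sphereEnergy n h C := by
  classical
  set D : Set ℝ := Set.Ico (-1 : ℝ) 1 with hD
  have hDconv : Convex ℝ D := convex_Ico _ _
  have hintD : interior D = Set.Ioo (-1 : ℝ) 1 := interior_Ico
  have hcont : ContinuousOn h D := hh.1.continuousOn
  -- differentiability on the interior
  have hcdIoo : ContDiffOn ℝ (⊤ : ℕ∞) h (Set.Ioo (-1 : ℝ) 1) :=
    (hh.1.of_le (by simp)).mono Set.Ioo_subset_Ico_self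
  have hdiff : DifferentiableOn ℝ h (interior D) := by
    rw [hintD]; exact hcdIoo.differentiableOn (by simp)
  have hderiv_cd : ContDiffOn ℝ (⊤ : ℕ∞) (deriv h) (Set.Ioo (-1 : ℝ) 1) :=
    ((contDiffOn_infty_iff_deriv_of_isOpen isOpen_Ioo).1 hcdIoo).2
  have hdiff2 : DifferentiableOn ℝ (deriv h) (interior D) := by
    rw [hintD]; exact hderiv_cd.differentiableOn (by simp)
  -- convexity and monotonicity
  have hconv : ConvexOn ℝ D h := by
    refine convexOn_of_deriv2_nonneg hDconv hcont hdiff hdiff2 ?_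
    intro x hx
    rw [hintD] at hx
    rw [← iteratedDeriv_eq_iterate]
    exact interior_deriv_nonneg hh 2 x hx
  have hmono : MonotoneOn h D := by
    refine monotoneOn_of_deriv_nonneg hDconv hcont hdiff ?_
    intro x hx
    rw [hintD] at hx
    have := interior_deriv_nonneg hh 1 x hx
    rwa [iteratedDeriv_one] at this
  -- basic facts about points of C
  have hnorm : ∀ x ∈ C, ‖x‖ = 1 := by
    intro x hx
    have := hC hx
    rwa [mem_sphere_zero_iff_norm] at this
  have hmemD : ∀ p ∈ C.offDiag, ⟪p.1, p.2⟫ ∈ D := by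
    intro p hp
    rw [Finset.mem_offDiag] at hp
    obtain ⟨h1, h2, hne⟩ := hp
    have hn1 : ‖p.1‖ = 1 := hnorm _ h1
    have hn2 : ‖p.2‖ = 1 := hnorm _ h2
    have habs : |⟪p.1, p.2⟫| ≤ 1 := by
      have := abs_real_inner_le_norm p.1 p.2
      rwa [hn1, hn2, mul_one] at this
    have hlt : ⟪p.1, p.2⟫ < 1 := by
      rcases lt_or_eq_of_le ((abs_le.1 habs).2) with hlt | heq
      · exact hlt
      · exact absurd ((inner_eq_one_iff_of_norm_eq_one hn1 hn2).1 heq) hne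
    exact ⟨neg_le_of_abs_le habs, hlt⟩
  -- cardinality of offDiag
  have hNnat : C.offDiag.card = M * M - M := by
    rw [Finset.offDiag_card, hcard]
  have hMM : M ≤ M * M := Nat.le_mul_of_pos_left M (by omega)
  have hNR : (C.offDiag.card : ℝ) = (M : ℝ) * ((M : ℝ) - 1) := by
    rw [hNnat]
    push_cast [Nat.cast_sub hMM]
    ring
  have hM1 : (1 : ℝ) ≤ (M : ℝ) - 1 := by
    have : (2 : ℝ) ≤ (M : ℝ) := by exact_mod_cast hM
    linarith
  have hNpos : (0 : ℝ) < (M : ℝ) * ((M : ℝ) - 1) := by nlinarith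
  set N : ℝ := (M : ℝ) * ((M : ℝ) - 1) with hNdef
  -- sum of inner products over offDiag
  have hsum_split :
      (∑ p ∈ C.offDiag, ⟪p.1, p.2⟫) =
        ⟪∑ x ∈ C, x, ∑ x ∈ C, x⟫ - (M : ℝ) := by
    have hfull : (∑ p ∈ C ×ˢ C, ⟪p.1, p.2⟫) = ⟪∑ x ∈ C, x, ∑ x ∈ C, x⟫ := by
      rw [sum_inner, Finset.sum_product]
      congr 1; ext x
      rw [inner_sum]
    have hdiag : (∑ p ∈ C.diag, ⟪p.1, p.2⟫) = (M : ℝ) := by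
      rw [Finset.sum_diag]
      have : ∀ x ∈ C, ⟪x, x⟫ = (1 : ℝ) := by
        intro x hx
        rw [real_inner_self_eq_norm_sq, hnorm x hx]; norm_num
      rw [Finset.sum_congr rfl this]
      simp [hcard]
    have hunion : (∑ p ∈ C ×ˢ C, ⟪p.1, p.2⟫)
        = (∑ p ∈ C.diag, ⟪p.1, p.2⟫) + (∑ p ∈ C.offDiag, ⟪p.1, p.2⟫) := by
      rw [← Finset.diag_union_offDiag C,
        Finset.sum_union (Finset.disjoint_diag_offDiag C)]
    have := hunion.symm.trans hfull
    linarith [this, hdiag]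
  have hsum_lb : -(M : ℝ) ≤ ∑ p ∈ C.offDiag, ⟪p.1, p.2⟫ := by
    rw [hsum_split]
    have : (0 : ℝ) ≤ ⟪∑ x ∈ C, x, ∑ x ∈ C, x⟫ := real_inner_self_nonneg
    linarith
  -- the mean of the inner products
  set tbar : ℝ := N⁻¹ * ∑ p ∈ C.offDiag, ⟪p.1, p.2⟫ with htbar
  have hM1pos : (0:ℝ) < (M:ℝ) - 1 := by linarith
  have htbar_lb : -1 / ((M : ℝ) - 1) ≤ tbar := by
    have h1 : -1 / ((M : ℝ) - 1) = N⁻¹ * (-(M:ℝ)) := by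
      rw [hNdef]
      field_simp
    rw [htbar, h1]
    exact mul_le_mul_of_nonneg_left hsum_lb (by positivity)
  have hbase_mem : -1 / ((M : ℝ) - 1) ∈ D := by
    have hle1 : 1 / ((M : ℝ) - 1) ≤ 1 := by
      rw [div_le_one hM1pos]; linarith
    constructor
    · rw [neg_div]; linarith
    · have : -1 / ((M : ℝ) - 1) ≤ 0 := by
        apply div_nonpos_of_nonpos_of_nonneg <;> linarith
      linarith
  have htbar_lt : tbar < 1 := by
    have hsum_lt : (∑ p ∈ C.offDiag, ⟪p.1, p.2⟫) < N := by
      have hne : C.offDiag.Nonempty := by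
        rw [← Finset.card_pos, hNnat]
        have h4 : M < M * M := by nlinarith
        omega
      calc (∑ p ∈ C.offDiag, ⟪p.1, p.2⟫) < ∑ p ∈ C.offDiag, (1 : ℝ) := by
            apply Finset.sum_lt_sum_of_nonempty hne
            intro p hp
            exact (hmemD p hp).2
        _ = N := by rw [Finset.sum_const, nsmul_eq_mul, mul_one, hNR]
    rw [htbar]
    calc N⁻¹ * ∑ p ∈ C.offDiag, ⟪p.1, p.2⟫ < N⁻¹ * N :=
          mul_lt_mul_of_pos_left hsum_lt (by positivity)
      _ = 1 := inv_mul_cancel₀ (ne_of_gt hNpos)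
  have htbar_mem : tbar ∈ D := ⟨le_trans hbase_mem.1 htbar_lb, htbar_lt⟩
  -- Jensen's inequality
  have hjensen : h tbar ≤ N⁻¹ * ∑ p ∈ C.offDiag, h ⟪p.1, p.2⟫ := by
    have hw : ∀ p ∈ C.offDiag, (0 : ℝ) ≤ N⁻¹ := fun _ _ => by positivity
    have hw1 : (∑ _p ∈ C.offDiag, (N⁻¹ : ℝ)) = 1 := by
      rw [Finset.sum_const, nsmul_eq_mul, hNR, mul_inv_cancel₀ (ne_of_gt hNpos)]
    have := hconv.map_sum_le hw hw1 hmemD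
    simp only [smul_eq_mul] at this
    rw [← Finset.mul_sum, ← Finset.mul_sum] at this
    rw [htbar]
    exact this
  -- finish
  have hmono' : h (-1 / ((M : ℝ) - 1)) ≤ h tbar := hmono hbase_mem htbar_mem htbar_lb
  have : N * h (-1 / ((M : ℝ) - 1)) ≤ N * (N⁻¹ * ∑ p ∈ C.offDiag, h ⟪p.1, p.2⟫) := by
    apply mul_le_mul_of_nonneg_left (le_trans hmono' hjensen) (le_of_lt hNpos)
  rw [← mul_assoc, mul_inv_cancel₀ (ne_of_gt hNpos), one_mul] at this
  rw [sphereEnergy]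
  exact this
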